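/- arXiv:1409.5154 — 5 statements merged into one kernel-verified Lean document; each statement's English description precedes it below -/
import Mathlib

section
/- For all finite simple graphs G and H, the Thue chromatic number of the lexicographic product satisfies π(G ∘ H) ≤ π(H) + (|V(G)| − α(G))·|V(H)|, where α(G) is the independence number of G. -/
/-- A list is a repetition if it is of the form `w ++ w` for a nonempty `w`. -/
def IsRepetition {α : Type*} (l : List α) : Prop := ∃ w : List α, w ≠ [] ∧ l = w ++ w

/-- A list is non-repetitive if no block of consecutive elements is a repetition. -/
def NonRepetitive {α : Type*} (l : List α) : Prop :=
  ∀ t : List α, t <:+: l → ¬ IsRepetition t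

/-- A vertex colouring is non-repetitive if the colour sequence of every path
is not a repetition. -/
def NonRepColoring {V β : Type*} (G : SimpleGraph V) (φ : V → β) : Prop :=
  ∀ ⦃u v : V⦄ (p : G.Walk u v), p.IsPath → ¬ IsRepetition (p.support.map φ)

/-- The Thue chromatic number: minimum number of colours of a non-repetitive colouring. -/
noncomputable def thueNumber {V : Type*} [Fintype V] (G : SimpleGraph V) : ℕ :=
  sInf {k | ∃ φ : V → Fin k, NonRepColoring G φ}

/-- The Thue choice number: least `k` such that from any lists of size at least `k`
one can choose a non-repetitive colouring. -/
noncomputable def thueChoiceNumber {V : Type*} [Fintype V] (G : SimpleGraph V) : ℕ :=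
  sInf {k | ∀ L : V → Finset ℕ, (∀ v, k ≤ (L v).card) →
    ∃ φ : V → ℕ, (∀ v, φ v ∈ L v) ∧ NonRepColoring G φ}

/-- The independence number of a graph. -/
noncomputable def indepNum {V : Type*} [Fintype V] (G : SimpleGraph V) : ℕ :=
  sSup {n | ∃ s : Finset V, (∀ a ∈ s, ∀ b ∈ s, ¬ G.Adj a b) ∧ s.card = n}

/-- The lexicographic product of two simple graphs. -/
def lexProd {V W : Type*} (G : SimpleGraph V) (H : SimpleGraph W) : SimpleGraph (V × W) where
  Adj x y := G.Adj x.1 y.1 ∨ (x.1 = y.1 ∧ H.Adj x.2 y.2)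
  symm := by
    constructor
    rintro x y (h | ⟨h1, h2⟩)
    · exact Or.inl h.symm
    · exact Or.inr ⟨h1.symm, h2.symm⟩
  loopless := by
    constructor
    rintro x (h | ⟨h1, h2⟩)
    · exact G.loopless.irrefl _ h
    · exact H.loopless.irrefl _ h2

/-!
Take a maximum independent set `S` of `G`, colour `(u, w)` with `u ∈ S` by an optimal
non-repetitive colouring of `H` at `w`, and give each of the remaining
`(|V(G)| - α(G)) · |V(H)|` vertices a colour of its own. In a repetition every entry occurs
at least twice, so a repetitively coloured path avoids the vertices with their own colour.
Since `S` is independent, such a path never moves between fibres `{u} × V(H)`, so it is a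
path of `H` coloured by the colouring of `H`.
-/

lemma IsRepetition.two_le_count {α : Type*} [BEq α] [LawfulBEq α] {l : List α}
    (h : IsRepetition l) {a : α} (ha : a ∈ l) : 2 ≤ l.count a := by
  obtain ⟨w, -, rfl⟩ := h
  have : 0 < w.count a := List.count_pos_iff.2 (by simpa using ha)
  rw [List.count_append]
  omega

lemma not_isRepetition_map_of_unique {α β : Type*} {f : α → β} {l : List α} (hl : l.Nodup)
    {x : α} (hx : x ∈ l) (hfx : ∀ y, f y = f x → y = x) : ¬ IsRepetition (l.map f) := fun h ↦ by
  classical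
  have hcount : (l.map f).count (f x) = l.count x := by
    simp only [List.count_eq_countP, List.countP_map]
    refine List.countP_congr fun y _ ↦ ?_
    simp only [Function.comp_apply, beq_iff_eq]
    exact ⟨hfx y, congrArg f⟩
  have := h.two_le_count (List.mem_map_of_mem hx)
  rw [hcount, List.count_eq_one_of_mem hl hx] at this
  omega

lemma isRepetition_map_iff {α β : Type*} {f : α → β} (hf : Function.Injective f)
    {l : List α} : IsRepetition (l.map f) ↔ IsRepetition l := by
  constructor
  · rintro ⟨w, hw, hl⟩
    obtain ⟨l₁, l₂, rfl, h₁, h₂⟩ := List.map_eq_append_iff.1 hl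
    obtain rfl : l₁ = l₂ := List.map_injective_iff.2 hf (h₁.trans h₂.symm)
    exact ⟨l₁, by rintro rfl; simp_all, rfl⟩
  · rintro ⟨w, hw, rfl⟩
    exact ⟨w.map f, by simpa using hw, List.map_append⟩

section Coloring

variable {V β γ : Type*} {G : SimpleGraph V}

lemma nonRepColoring_of_injective {φ : V → β} (hφ : Function.Injective φ) :
    NonRepColoring G φ := fun _ _ p hp ↦
  not_isRepetition_map_of_unique hp.support_nodup p.start_mem_support fun _ h ↦ hφ h

lemma NonRepColoring.comp_injective {φ : V → β} (hφ : NonRepColoring G φ) {f : β → γ}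
    (hf : Function.Injective f) : NonRepColoring G (f ∘ φ) := fun _ _ p hp h ↦
  hφ p hp <| (isRepetition_map_iff hf).1 <| by rwa [List.map_map]

lemma thueNumber_le_card [Fintype V] [Fintype β] {φ : V → β} (hφ : NonRepColoring G φ) :
    thueNumber G ≤ Fintype.card β := by
  apply Nat.sInf_le
  exact ⟨Fintype.equivFin β ∘ φ, hφ.comp_injective (Fintype.equivFin β).injective⟩

lemma exists_nonRepColoring_fin_thueNumber [Fintype V] (G : SimpleGraph V) :
    ∃ φ : V → Fin (thueNumber G), NonRepColoring G φ :=
  Nat.sInf_mem (s := {k | ∃ φ : V → Fin k, NonRepColoring G φ})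
    ⟨Fintype.card V, Fintype.equivFin V, nonRepColoring_of_injective (Fintype.equivFin V).injective⟩

lemma exists_indep_finset_card_eq_indepNum [Fintype V] (G : SimpleGraph V) :
    ∃ s : Finset V, (∀ a ∈ s, ∀ b ∈ s, ¬ G.Adj a b) ∧ s.card = indepNum G :=
  Nat.sSup_mem (s := {n | ∃ s : Finset V, (∀ a ∈ s, ∀ b ∈ s, ¬ G.Adj a b) ∧ s.card = n})
    ⟨0, ∅, by simp, rfl⟩ ⟨Fintype.card V, fun _ ⟨s, _, hs⟩ ↦ hs ▸ s.card_le_univ⟩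

end Coloring

section LexProd

variable {V W β : Type*} {G : SimpleGraph V} {H : SimpleGraph W}

lemma lexProd_walk_fst_eq_of_indep {S : Finset V} (hS : ∀ a ∈ S, ∀ b ∈ S, ¬ G.Adj a b)
    {x y : V × W} (p : (lexProd G H).Walk x y) (hp : ∀ z ∈ p.support, z.1 ∈ S) :
    ∀ z ∈ p.support, z.1 = x.1 := by
  induction p with
  | nil => simp
  | @cons u v _ huv p ih =>
    have hfst : u.1 = v.1 := huv.resolve_left (hS _ (hp u (by simp)) _ (hp v (by simp))) |>.1
    simp only [SimpleGraph.Walk.support_cons, List.mem_cons, forall_eq_or_imp, true_and] at hp ⊢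
    exact fun z hz ↦ (ih hp.2 z hz).trans hfst.symm

lemma exists_walk_support_eq_map_snd {x y : V × W} (p : (lexProd G H).Walk x y)
    (hp : ∀ z ∈ p.support, z.1 = x.1) :
    ∃ q : H.Walk x.2 y.2, q.support = p.support.map Prod.snd := by
  induction p with
  | nil => exact ⟨.nil, rfl⟩
  | @cons u v _ huv p ih =>
    simp only [SimpleGraph.Walk.support_cons, List.mem_cons, forall_eq_or_imp] at hp
    have hfst : v.1 = u.1 := hp.2 v p.start_mem_support
    have hadj : H.Adj u.2 v.2 :=
      (huv.resolve_left fun h ↦ G.loopless.irrefl _ (hfst ▸ h)).2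
    obtain ⟨q, hq⟩ := ih fun z hz ↦ (hp.2 z hz).trans hfst.symm
    exact ⟨.cons hadj q, by simp [hq]⟩

def lexProdColoring [DecidableEq V] (S : Finset V) (φ : W → β) (x : V × W) :
    β ⊕ {x : V × W // x.1 ∉ S} :=
  if h : x.1 ∈ S then .inl (φ x.2) else .inr ⟨x, h⟩

lemma nonRepColoring_lexProdColoring [DecidableEq V]
    {S : Finset V} (hS : ∀ a ∈ S, ∀ b ∈ S, ¬ G.Adj a b) {φ : W → β}
    (hφ : NonRepColoring H φ) : NonRepColoring (lexProd G H) (lexProdColoring S φ) := by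
  intro x y p hp hrep
  by_cases hpS : ∀ z ∈ p.support, z.1 ∈ S
  · have hfst := lexProd_walk_fst_eq_of_indep hS p hpS
    obtain ⟨q, hq⟩ := exists_walk_support_eq_map_snd p hfst
    have hqpath : q.IsPath := .mk' <| hq ▸ hp.support_nodup.map_on
      fun a ha b hb hab ↦ Prod.ext ((hfst a ha).trans (hfst b hb).symm) hab
    have hcol : p.support.map (lexProdColoring S φ) = (q.support.map φ).map Sum.inl := by
      rw [hq, List.map_map, List.map_map]
      exact List.map_congr_left fun z hz ↦ dif_pos (hpS z hz)
    exact hφ q hqpath <| (isRepetition_map_iff Sum.inl_injective).1 (hcol ▸ hrep)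
  · push Not at hpS
    obtain ⟨z, hz, hzS⟩ := hpS
    refine not_isRepetition_map_of_unique hp.support_nodup hz (fun z' h ↦ ?_) hrep
    unfold lexProdColoring at h
    split_ifs at h
    simpa using h

lemma card_subtype_fst_notMem [Fintype V] [Fintype W] [DecidableEq V] (S : Finset V) :
    Fintype.card {x : V × W // x.1 ∉ S} = (Fintype.card V - S.card) * Fintype.card W := by
  rw [Fintype.card_congr (Equiv.prodSubtypeFstEquivSubtypeProd (p := (· ∉ S))),
    Fintype.card_prod, Fintype.card_subtype_compl, Fintype.card_coe]

end LexProd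

/-- Upper bound for the Thue chromatic number of a lexicographic product. -/
theorem thueNumber_lexProd_le {V W : Type*} [Fintype V] [Fintype W]
    (G : SimpleGraph V) (H : SimpleGraph W) :
    thueNumber (lexProd G H) ≤
      thueNumber H + (Fintype.card V - indepNum G) * Fintype.card W := by
  classical
  obtain ⟨S, hS, hScard⟩ := exists_indep_finset_card_eq_indepNum G
  obtain ⟨φ, hφ⟩ := exists_nonRepColoring_fin_thueNumber H
  calc thueNumber (lexProd G H)
      ≤ Fintype.card (Fin (thueNumber H) ⊕ {x : V × W // x.1 ∉ S}) :=
        thueNumber_le_card (nonRepColoring_lexProdColoring hS hφ)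
    _ = thueNumber H + (Fintype.card V - indepNum G) * Fintype.card W := by
        rw [Fintype.card_sum, Fintype.card_fin, card_subtype_fst_notMem, hScard]
end

section
/- For every finite simple graph G on n vertices, the Thue choice number satisfies π_ch(G) ≤ n − α(G) + 1: for every list assignment L giving each vertex a list of at least n − α(G) + 1 colours, there is a non-repetitive colouring of G choosing each vertex's colour from its list. -/
/-! A maximum independent set `S` has `n - α(G)` vertices outside it. By Hall's theorem those
vertices can be given pairwise distinct colours from their lists, and the lists, of size
`n - α(G) + 1`, still leave every vertex of `S` a colour used nowhere outside `S`. In a path whose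
colour sequence is a repetition `w ++ w`, every colour occurs on two distinct vertices, so the
whole path lies in `S`; but its first two vertices are adjacent. -/

open Finset

theorem indepNum_eq_indepNum {V : Type*} [Fintype V] (G : SimpleGraph V) :
    indepNum G = G.indepNum := by
  unfold indepNum SimpleGraph.indepNum
  congr with n
  refine exists_congr fun s => ?_
  rw [SimpleGraph.isNIndepSet_iff]
  refine and_congr_left' ⟨fun h a ha b hb _ => h a ha b hb, fun h a ha b hb hab => ?_⟩
  exact h ha hb (G.ne_of_adj hab) hab

theorem List.exists_ne_map_eq_of_isRepetition_map {V α : Type*} {φ : V → α} {l : List V}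
    (hl : l.Nodup) (h : IsRepetition (l.map φ)) {x : V} (hx : x ∈ l) :
    ∃ y ∈ l, y ≠ x ∧ φ y = φ x := by
  obtain ⟨w, -, hw⟩ := h
  obtain ⟨l₁, l₂, rfl, h₁, h₂⟩ := List.map_eq_append_iff.1 hw
  have hdisj := List.disjoint_of_nodup_append hl
  have mem_other : ∀ {k m : List V}, k.map φ = m.map φ → x ∈ k → ∃ y ∈ m, φ y = φ x :=
    fun hkm hxk => List.mem_map.1 (hkm ▸ List.mem_map_of_mem hxk)
  rcases List.mem_append.1 hx with hx₁ | hx₂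
  · obtain ⟨y, hy, hφ⟩ := mem_other (h₁.trans h₂.symm) hx₁
    exact ⟨y, List.mem_append_right _ hy, fun hyx => hdisj hx₁ (hyx ▸ hy), hφ⟩
  · obtain ⟨y, hy, hφ⟩ := mem_other (h₂.trans h₁.symm) hx₂
    exact ⟨y, List.mem_append_left _ hy, fun hyx => hdisj (hyx ▸ hy) hx₂, hφ⟩

theorem nonRepColoring_of_isIndepSet {V α : Type*} {G : SimpleGraph V} {s : Set V}
    (hs : G.IsIndepSet s) {φ : V → α} (hφ : ∀ u ∉ s, ∀ v, φ v = φ u → v = u) :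
    NonRepColoring G φ := by
  intro u v p hp hrep
  have support_subset : ∀ x ∈ p.support, x ∈ s := by
    intro x hx
    by_contra hxs
    obtain ⟨y, -, hyx, hφy⟩ :=
      List.exists_ne_map_eq_of_isRepetition_map hp.support_nodup hrep hx
    exact hyx (hφ x hxs y hφy)
  cases p with
  | nil =>
    obtain ⟨w, -, hw⟩ := hrep
    have := congrArg List.length hw
    simp only [SimpleGraph.Walk.support_nil, List.map_cons, List.map_nil, List.length_cons,
      List.length_nil, List.length_append] at this
    omega
  | cons hadj q =>
    exact hs (support_subset _ (by simp)) (support_subset _ (by simp))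
      (G.ne_of_adj hadj) hadj

theorem exists_choice_colours_unique_on {V α : Type*} [DecidableEq α] (L : V → Finset α)
    (t : Finset V) (hL : ∀ v, #t < #(L v)) :
    ∃ φ : V → α, (∀ v, φ v ∈ L v) ∧ ∀ u ∈ t, ∀ v, φ v = φ u → v = u := by
  classical
  obtain ⟨f, hf_inj, hf_mem⟩ :=
    (all_card_le_biUnion_card_iff_exists_injective fun v : t => L v).1 fun A => by
      rcases A.eq_empty_or_nonempty with rfl | ⟨a, ha⟩
      · simp
      calc #A ≤ #t := by simpa using A.card_le_univ
        _ ≤ #(L a) := (hL a).le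
        _ ≤ _ := card_le_card (subset_biUnion_of_mem (fun v : t => L v) ha)
  have hfresh : ∀ v, ∃ c ∈ L v, c ∉ univ.image f := fun v =>
    exists_mem_notMem_of_card_lt_card (card_image_le.trans_lt (by simpa using hL v))
  choose g hg_mem hg_fresh using hfresh
  refine ⟨fun v => if h : v ∈ t then f ⟨v, h⟩ else g v, fun v => ?_, fun u hu v huv => ?_⟩
  · dsimp only
    split_ifs
    exacts [hf_mem _, hg_mem v]
  · simp only [dif_pos hu] at huv
    split_ifs at huv with hv
    · exact congrArg Subtype.val (hf_inj huv)
    · exact absurd (huv ▸ mem_image_of_mem f (mem_univ _)) (hg_fresh v)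

/-- `π_ch(G) ≤ n - α(G) + 1`: from any lists of size at least `n - α(G) + 1`
one can choose a non-repetitive colouring. -/
theorem thueChoiceNumber_le {V : Type*} [Fintype V] (G : SimpleGraph V) :
    (∀ L : V → Finset ℕ, (∀ v, Fintype.card V - indepNum G + 1 ≤ (L v).card) →
      ∃ φ : V → ℕ, (∀ v, φ v ∈ L v) ∧ NonRepColoring G φ) ∧
    thueChoiceNumber G ≤ Fintype.card V - indepNum G + 1 := by
  classical
  obtain ⟨s, hs, hcard⟩ := G.exists_isNIndepSet_indepNum
  have hcompl : #sᶜ = Fintype.card V - indepNum G := by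
    rw [card_compl, hcard, indepNum_eq_indepNum]
  have hchoice : ∀ L : V → Finset ℕ, (∀ v, Fintype.card V - indepNum G + 1 ≤ (L v).card) →
      ∃ φ : V → ℕ, (∀ v, φ v ∈ L v) ∧ NonRepColoring G φ := by
    intro L hL
    obtain ⟨φ, hφL, hφ⟩ := exists_choice_colours_unique_on L sᶜ fun v => by
      have := hL v
      omega
    exact ⟨φ, hφL, nonRepColoring_of_isIndepSet hs fun u hu => hφ u (by simpa using hu)⟩
  exact ⟨hchoice, Nat.sInf_le hchoice⟩
end

section
/- For the complete bipartite graph K_{m,n} with m,n ≥ 1, π(K_{m,n}) = min{m,n} + 1. -/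
/-!
Along a path of `K_{α,β}` the sides alternate. If a colouring gives the two sides disjoint
palettes, a repetition `w w` on a path forces `|w|` to be even, so every vertex of the first half
lies on the same side as its partner `|w|` steps later; if moreover the colouring is injective on
one side, one of the first two vertices lies on that side and would coincide with its partner.
Conversely a monochromatic edge, or colour collisions `a ≠ a'` and `b ≠ b'` on both sides (path
`a b a' b'`), give a repetition. Hence a non-repetitive colouring needs all colours of one side
distinct and one more for the other side, and `min + 1` colours suffice.
-/

open SimpleGraph Function Sum

section Alternating

variable {γ β : Type*}

theorem IsRepetition.exists_half {l : List γ} (h : IsRepetition l) :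
    ∃ k, 0 < k ∧ ∃ hk : k + k = l.length, ∀ i (hi : i < k), l[i] = l[i + k] := by
  obtain ⟨w, hw, rfl⟩ := h
  refine ⟨w.length, List.length_pos_iff.mpr hw, List.length_append.symm, fun i hi => ?_⟩
  rw [List.getElem_append_left hi, List.getElem_append_right (by omega)]
  simp

theorem List.IsChain.apply_getElem_add_eq_iff_even {f : γ → Bool} {l : List γ}
    (h : l.IsChain fun a b => f a ≠ f b) {i d : ℕ} (hid : i + d < l.length) :
    f l[i + d] = f l[i] ↔ Even d := by
  induction d with
  | zero => simp
  | succ d ih =>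
    have hstep : f l[i + (d + 1)] = !f l[i + d] :=
      Bool.eq_not_iff.mpr (List.isChain_iff_getElem.mp h (i + d) (by omega)).symm
    rw [hstep, Nat.even_add_one, ← ih (by omega)]
    cases f l[i + d] <;> cases f l[i] <;> simp

theorem not_isRepetition_map_of_isChain_ne {f : γ → Bool} {l : List γ} (hnd : l.Nodup)
    (halt : l.IsChain fun a b => f a ≠ f b) {φ : γ → β} (hsep : ∀ a b, φ a = φ b → f a = f b)
    {s : Bool} (hinj : Set.InjOn φ {a | f a = s}) : ¬IsRepetition (l.map φ) := by
  intro hrep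
  obtain ⟨k, hk, hlen, hper⟩ := hrep.exists_half
  simp only [List.length_map] at hlen
  have hφ : ∀ i (hi : i < k), φ l[i] = φ l[i + k] := fun i hi => by
    simpa using hper i hi
  have hsame : ∀ i (hi : i < k), f l[i + k] = f l[i] := fun i hi =>
    (hsep _ _ (hφ i hi)).symm
  have heven : Even k := by
    simpa using (halt.apply_getElem_add_eq_iff_even (i := 0) (d := k) (by omega)).mp
      (by simpa using hsame 0 hk)
  have hk2 : 1 < k := by obtain ⟨t, rfl⟩ := heven; omega
  have h01 : f l[0 + 1] ≠ f l[0] := by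
    rw [Ne, halt.apply_getElem_add_eq_iff_even (by omega)]; decide
  obtain ⟨i, hi, hfi⟩ : ∃ i, ∃ hi : i < k, f l[i] = s := by
    by_cases h0 : f l[0] = s
    · exact ⟨0, by omega, h0⟩
    · exact ⟨1, hk2, by rw [Bool.eq_not_iff.mpr h01, Bool.eq_not_iff.mpr h0, Bool.not_not]⟩
  have heq : l[i] = l[i + k] :=
    hinj hfi (show f l[i + k] = s by rw [hsame i hi, hfi]) (hφ i hi)
  have := (hnd.getElem_inj_iff).mp heq
  omega

end Alternating

theorem NonRepColoring.of_injOn_colorClass {V β : Type*} {G : SimpleGraph V} (c : G.Coloring Bool)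
    {φ : V → β} (hsep : ∀ u v, φ u = φ v → c u = c v) {s : Bool}
    (hinj : Set.InjOn φ (c.colorClass s)) : NonRepColoring G φ := fun _ _ p hp =>
  not_isRepetition_map_of_isChain_ne (f := c) hp.support_nodup
    (p.isChain_adj_support.imp fun _ _ => c.valid) hsep hinj

section CompleteBipartite

variable {α β γ : Type*}

def completeBipartiteGraph.isLeftColoring : (completeBipartiteGraph α β).Coloring Bool :=
  Coloring.mk Sum.isLeft fun {u v} h => by cases u <;> cases v <;> simp_all

@[simp]
theorem completeBipartiteGraph.isLeftColoring_apply (u : α ⊕ β) :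
    completeBipartiteGraph.isLeftColoring u = u.isLeft :=
  rfl

theorem nonRepColoring_completeBipartiteGraph_iff {φ : α ⊕ β → γ} :
    NonRepColoring (completeBipartiteGraph α β) φ ↔
      (∀ a b, φ (inl a) ≠ φ (inr b)) ∧ (Injective (φ ∘ inl) ∨ Injective (φ ∘ inr)) := by
  constructor
  · intro hφ
    have hlr : ∀ a b, (completeBipartiteGraph α β).Adj (inl a) (inr b) := by simp
    have hrl : ∀ b a, (completeBipartiteGraph α β).Adj (inr b) (inl a) := by simp
    refine ⟨fun a b hab => hφ (Walk.cons (hlr a b) Walk.nil) (by simp [Walk.isPath_def])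
      ⟨[φ (inl a)], by simp, by simp [hab]⟩, ?_⟩
    by_contra! hninj
    obtain ⟨⟨a, a', ha, haa'⟩, ⟨b, b', hb, hbb'⟩⟩ :=
      And.imp not_injective_iff.mp not_injective_iff.mp hninj
    refine hφ (Walk.cons (hlr a b) (Walk.cons (hrl b a') (Walk.cons (hlr a' b') Walk.nil)))
      (by simp [Walk.isPath_def, haa', hbb']) ⟨[φ (inl a), φ (inr b)], by simp, ?_⟩
    simp_all
  · rintro ⟨hcross, hinj⟩
    have hsep : ∀ u v, φ u = φ v → u.isLeft = v.isLeft := by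
      rintro (a | b) (a' | b') h
      exacts [rfl, absurd h (hcross a b'), absurd h.symm (hcross a' b), rfl]
    rcases hinj with hinj | hinj
    · refine NonRepColoring.of_injOn_colorClass completeBipartiteGraph.isLeftColoring hsep
        (s := true) ?_
      rintro (a | b) ha (a' | b') ha' h
      all_goals simp_all [Coloring.colorClass]
      exact hinj h
    · refine NonRepColoring.of_injOn_colorClass completeBipartiteGraph.isLeftColoring hsep
        (s := false) ?_
      rintro (a | b) ha (a' | b') ha' h
      all_goals simp_all [Coloring.colorClass]
      exact hinj h

theorem min_card_lt_card_of_nonRepColoring [Fintype α] [Fintype β] [Fintype γ] [Nonempty α]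
    [Nonempty β] {φ : α ⊕ β → γ} (hφ : NonRepColoring (completeBipartiteGraph α β) φ) :
    min (Fintype.card α) (Fintype.card β) < Fintype.card γ := by
  obtain ⟨hcross, hinj | hinj⟩ := nonRepColoring_completeBipartiteGraph_iff.mp hφ
  · have hlt := Fintype.card_lt_of_injective_of_notMem _ hinj
        (b := φ (inr (Classical.arbitrary β)))
        (by rintro ⟨a, ha⟩; exact hcross a _ ha)
    exact (min_le_left _ _).trans_lt hlt
  · have hlt := Fintype.card_lt_of_injective_of_notMem _ hinj
        (b := φ (inl (Classical.arbitrary α)))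
        (by rintro ⟨b, hb⟩; exact hcross _ b hb.symm)
    exact (min_le_right _ _).trans_lt hlt

theorem exists_nonRepColoring_completeBipartiteGraph [Fintype α] [Fintype β] :
    ∃ φ : α ⊕ β → Fin (min (Fintype.card α) (Fintype.card β) + 1),
      NonRepColoring (completeBipartiteGraph α β) φ := by
  rcases le_total (Fintype.card α) (Fintype.card β) with h | h
  · rw [min_eq_left h]
    exact ⟨Sum.elim (fun a => (Fintype.equivFin α a).succ) fun _ => 0,
      nonRepColoring_completeBipartiteGraph_iff.mpr ⟨fun _ _ => Fin.succ_ne_zero _,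
        Or.inl ((Fin.succ_injective _).comp (Fintype.equivFin α).injective)⟩⟩
  · rw [min_eq_right h]
    exact ⟨Sum.elim (fun _ => 0) fun b => (Fintype.equivFin β b).succ,
      nonRepColoring_completeBipartiteGraph_iff.mpr ⟨fun _ _ => (Fin.succ_ne_zero _).symm,
        Or.inr ((Fin.succ_injective _).comp (Fintype.equivFin β).injective)⟩⟩

theorem thueNumber_completeBipartiteGraph [Fintype α] [Fintype β] [Nonempty α] [Nonempty β] :
    thueNumber (completeBipartiteGraph α β) = min (Fintype.card α) (Fintype.card β) + 1 := by
  obtain ⟨φ, hφ⟩ := exists_nonRepColoring_completeBipartiteGraph (α := α) (β := β)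
  refine le_antisymm (Nat.sInf_le ⟨φ, hφ⟩) (le_csInf ⟨_, φ, hφ⟩ ?_)
  rintro k ⟨ψ, hψ⟩
  simpa using min_card_lt_card_of_nonRepColoring hψ

end CompleteBipartite

/-- `π(K_{m,n}) = min{m,n} + 1`. -/
theorem thueNumber_completeBipartite (m n : ℕ) (hm : 1 ≤ m) (hn : 1 ≤ n) :
    thueNumber (completeBipartiteGraph (Fin m) (Fin n)) = min m n + 1 := by
  have : Nonempty (Fin m) := Fin.pos_iff_nonempty.mp hm
  have : Nonempty (Fin n) := Fin.pos_iff_nonempty.mp hn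
  simpa using thueNumber_completeBipartiteGraph (α := Fin m) (β := Fin n)
end

section
/- For the complete bipartite graph K_{m,n} with m,n ≥ 1, the Thue choice number π_ch(K_{m,n}) equals min{m,n} + 1. -/
/-!
In a non-repetitive colouring of `K_{m,n}` an edge cannot be monochromatic and, via a path on
four vertices, some side must be rainbow; with only `min m n` colours the rainbow side uses up
every colour, leaving none for the other side. Conversely, a repetitive path repeats each of its
colours at two distinct vertices, so a colouring that is injective on a vertex cover `S` and
avoids the colours of `S` elsewhere is non-repetitive; Hall's theorem provides such a colouring
from lists of size `|S| + 1`, and either side of `K_{m,n}` is a vertex cover.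
-/

open SimpleGraph Function

theorem List.exists_ne_map_eq_of_map_eq_append_self {α γ : Type*} {φ : α → γ} {s : List α}
    {w : List γ} (hs : s.Nodup) (h : s.map φ = w ++ w) {x : α} (hx : x ∈ s) :
    ∃ y ∈ s, y ≠ x ∧ φ y = φ x := by
  obtain ⟨s₁, s₂, rfl, h₁, h₂⟩ := List.map_eq_append_iff.mp h
  have hdisj := hs.disjoint
  rcases List.mem_append.mp hx with hx | hx
  · obtain ⟨y, hy, hyx⟩ := List.mem_map.mp (h₂ ▸ h₁ ▸ List.mem_map_of_mem hx : φ x ∈ s₂.map φ)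
    exact ⟨y, List.mem_append_right _ hy, fun e => hdisj hx (e ▸ hy), hyx⟩
  · obtain ⟨y, hy, hyx⟩ := List.mem_map.mp (h₁ ▸ h₂ ▸ List.mem_map_of_mem hx : φ x ∈ s₁.map φ)
    exact ⟨y, List.mem_append_left _ hy, fun e => hdisj (e ▸ hy) hx, hyx⟩

theorem Finset.exists_injective_forall_mem_of_card_le {ι γ : Type*} [Fintype ι]
    (L : ι → Finset γ) (hL : ∀ i, Fintype.card ι ≤ (L i).card) :
    ∃ f : ι → γ, Injective f ∧ ∀ i, f i ∈ L i := by
  classical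
  refine (Finset.all_card_le_biUnion_card_iff_exists_injective L).mp fun s => ?_
  rcases s.eq_empty_or_nonempty with rfl | ⟨i, hi⟩
  · simp
  · calc s.card ≤ Fintype.card ι := s.card_le_univ
      _ ≤ (L i).card := hL i
      _ ≤ (s.biUnion L).card := Finset.card_le_card (Finset.subset_biUnion_of_mem L hi)

namespace SimpleGraph

variable {V γ : Type*} {G : SimpleGraph V} {φ : V → γ}

theorem nonRepColoring_of_isVertexCover {S : Set V} (hS : G.IsVertexCover S)
    (hφ : ∀ ⦃u v⦄, u ≠ v → φ u = φ v → u ∉ S) : NonRepColoring G φ := by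
  rintro u v p hp ⟨w, -, hw⟩
  have hout : ∀ x ∈ p.support, x ∉ S := fun x hx => by
    obtain ⟨y, -, hyx, hφyx⟩ := List.exists_ne_map_eq_of_map_eq_append_self hp.support_nodup hw hx
    exact hφ hyx.symm hφyx.symm
  cases p with
  | nil =>
    have := congrArg List.length hw
    simp only [Walk.support_nil, List.map_cons, List.map_nil, List.length_singleton,
      List.length_append] at this
    omega
  | cons hadj q =>
    rcases hS hadj with h | h
    · exact hout _ (by simp) h
    · exact hout _ (by simp [q.start_mem_support]) h

theorem exists_nonRepColoring_of_isVertexCover {S : Finset V}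
    (hS : G.IsVertexCover S) (L : V → Finset γ) (hL : ∀ v, S.card < (L v).card) :
    ∃ φ : V → γ, (∀ v, φ v ∈ L v) ∧ NonRepColoring G φ := by
  classical
  obtain ⟨f, hf_inj, hf_mem⟩ := Finset.exists_injective_forall_mem_of_card_le (fun v : S => L v)
    (fun v => by simpa using (hL v).le)
  have hfree : ∀ v, (L v \ Finset.univ.image f).Nonempty := fun v => by
    refine Finset.sdiff_nonempty.mpr fun hsub => (hL v).not_ge ?_
    calc (L v).card ≤ (Finset.univ.image f).card := Finset.card_le_card hsub
      _ ≤ S.card := by simpa using Finset.card_image_le (s := Finset.univ) (f := f)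
  let φ : V → γ := fun v => if hv : v ∈ S then f ⟨v, hv⟩ else (hfree v).choose
  refine ⟨φ, fun v => ?_, nonRepColoring_of_isVertexCover hS fun u v huv he (hu : u ∈ S) => ?_⟩
  · by_cases hv : v ∈ S
    · simpa [φ, hv] using hf_mem ⟨v, hv⟩
    · simpa [φ, hv] using (Finset.mem_sdiff.mp (hfree v).choose_spec).1
  · by_cases hv : v ∈ S
    · exact huv (congrArg Subtype.val (hf_inj (by simpa [φ, hu, hv] using he) :
        (⟨u, hu⟩ : S) = ⟨v, hv⟩))
    · refine (Finset.mem_sdiff.mp (hfree v).choose_spec).2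
        (Finset.mem_image.mpr ⟨⟨u, hu⟩, Finset.mem_univ _, ?_⟩)
      simpa [φ, hu, hv] using he

theorem NonRepColoring.ne_of_adj (h : NonRepColoring G φ) {u v : V} (huv : G.Adj u v) :
    φ u ≠ φ v := fun he =>
  h (Walk.cons huv Walk.nil) (by simp [huv.ne]) ⟨[φ u], by simp, by simp [he]⟩

theorem NonRepColoring.injective_comp_inl_or_injective_comp_inr {α β : Type*} {φ : α ⊕ β → γ}
    (h : NonRepColoring (completeBipartiteGraph α β) φ) :
    Injective (φ ∘ Sum.inl) ∨ Injective (φ ∘ Sum.inr) := by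
  by_contra! hc
  simp only [Injective, not_forall] at hc
  obtain ⟨⟨a, a', haa', hne⟩, ⟨b, b', hbb', hne'⟩⟩ := hc
  have h₁ : (completeBipartiteGraph α β).Adj (Sum.inl a) (Sum.inr b) := by simp
  have h₂ : (completeBipartiteGraph α β).Adj (Sum.inr b) (Sum.inl a') := by simp
  have h₃ : (completeBipartiteGraph α β).Adj (Sum.inl a') (Sum.inr b') := by simp
  exact h (Walk.cons h₁ (Walk.cons h₂ (Walk.cons h₃ Walk.nil))) (by simp [hne, hne'])
    ⟨[φ (Sum.inl a), φ (Sum.inr b)], by simp, by simp_all⟩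

theorem not_nonRepColoring_completeBipartiteGraph_of_card_le {α β : Type*} [Fintype α]
    [Fintype β] [Nonempty α] [Nonempty β] {C : Finset γ} (hα : C.card ≤ Fintype.card α)
    (hβ : C.card ≤ Fintype.card β) {φ : α ⊕ β → γ} (hC : ∀ v, φ v ∈ C) :
    ¬ NonRepColoring (completeBipartiteGraph α β) φ := by
  intro h
  rcases h.injective_comp_inl_or_injective_comp_inr with hinj | hinj
  · obtain ⟨a, -, ha⟩ := Finset.surjOn_of_injOn_of_card_le (φ ∘ Sum.inl) (s := Finset.univ)
      (fun a _ => hC _) hinj.injOn (by simpa using hα) (hC (Sum.inr (Classical.arbitrary β)))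
    exact h.ne_of_adj (by simp) ha
  · obtain ⟨b, -, hb⟩ := Finset.surjOn_of_injOn_of_card_le (φ ∘ Sum.inr) (s := Finset.univ)
      (fun b _ => hC _) hinj.injOn (by simpa using hβ) (hC (Sum.inl (Classical.arbitrary α)))
    exact h.ne_of_adj (by simp) hb.symm

end SimpleGraph

/-- `π_ch(K_{m,n}) = min{m,n} + 1`. -/
theorem thueChoiceNumber_completeBipartite (m n : ℕ) (hm : 1 ≤ m) (hn : 1 ≤ n) :
    thueChoiceNumber (completeBipartiteGraph (Fin m) (Fin n)) = min m n + 1 := by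
  have : Nonempty (Fin m) := Fin.pos_iff_nonempty.mp hm
  have : Nonempty (Fin n) := Fin.pos_iff_nonempty.mp hn
  rw [thueChoiceNumber, Nat.sInf_upward_closed_eq_succ_iff]
  swap
  · exact fun _ _ hk h L hL => h L fun v => hk.trans (hL v)
  refine ⟨fun L hL => ?_, fun h => ?_⟩
  · rcases le_total m n with hmn | hnm
    · refine exists_nonRepColoring_of_isVertexCover (S := Finset.univ.map Embedding.inl) ?_ L
        fun v => ?_
      · rintro (_ | _) (_ | _) h <;> simp_all
      · simpa [hmn] using Nat.lt_of_add_one_le (hL v)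
    · refine exists_nonRepColoring_of_isVertexCover (S := Finset.univ.map Embedding.inr) ?_ L
        fun v => ?_
      · rintro (_ | _) (_ | _) h <;> simp_all
      · simpa [hnm] using Nat.lt_of_add_one_le (hL v)
  · obtain ⟨φ, hφ, hnr⟩ := h (fun _ => Finset.range (min m n)) fun _ => by simp
    exact not_nonRepColoring_completeBipartiteGraph_of_card_le (by simp) (by simp) hφ hnr
end

section
/- Let G and H be finite simple graphs and suppose G ∘ H is coloured non-repetitively with fewer than π(G)·|V(H)| colours. If g ∈ V(G) is a vertex whose H-layer g[H] is not rainbow coloured (two vertices of g[H] share a colour), then for every vertex g' adjacent to g in G, the layer g'[H] is rainbow coloured (all its vertices receive pairwise distinct colours). -/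
section

variable {V W β : Type*}

theorem NonRepColoring.ne_of_path_four {G : SimpleGraph V} {φ : V → β}
    (hφ : NonRepColoring G φ) {a b c d : V} (hab : G.Adj a b) (hbc : G.Adj b c)
    (hcd : G.Adj c d) (hnodup : [a, b, c, d].Nodup) (hac : φ a = φ c) : φ b ≠ φ d := by
  intro hbd
  let p : G.Walk a d := .cons hab (.cons hbc (.cons hcd .nil))
  have hp : p.IsPath := SimpleGraph.Walk.IsPath.mk' hnodup
  exact hφ p hp ⟨[φ a, φ b], List.cons_ne_nil _ _, by simp [p, hac, hbd]⟩

theorem lexProd_adj_of_adj {G : SimpleGraph V} (H : SimpleGraph W) {g g' : V}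
    (hadj : G.Adj g g') (h h' : W) : (lexProd G H).Adj (g, h) (g', h') :=
  Or.inl hadj

end

theorem neighbour_layer_rainbow_general {V W : Type*}
    (G : SimpleGraph V) (H : SimpleGraph W) {β : Type*}
    (φ : V × W → β) (hφ : NonRepColoring (lexProd G H) φ)
    (g : V) (hg : ∃ h h' : W, h ≠ h' ∧ φ (g, h) = φ (g, h'))
    (g' : V) (hadj : G.Adj g g') :
    Function.Injective (fun h : W => φ (g', h)) := by
  intro w₁ w₂ hw
  by_contra hne
  obtain ⟨h, h', hhne, hcol⟩ := hg
  have hgg' : g ≠ g' := hadj.ne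
  have hnodup : [(g, h), (g', w₁), (g, h'), (g', w₂)].Nodup := by
    simp [Prod.ext_iff, hgg', hgg'.symm, hhne, hne]
  exact hφ.ne_of_path_four (lexProd_adj_of_adj H hadj h w₁)
    (lexProd_adj_of_adj H hadj.symm w₁ h') (lexProd_adj_of_adj H hadj h' w₂) hnodup hcol hw

/-- If `G ∘ H` is non-repetitively coloured with fewer than `π(G)·|V(H)|` colours
and the layer `g[H]` is not rainbow, then the layer of every neighbour of `g`
is rainbow coloured. -/
theorem neighbour_layer_rainbow {V W : Type*} [Fintype V] [Fintype W]
    (G : SimpleGraph V) (H : SimpleGraph W) {β : Type*} [DecidableEq β]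
    (φ : V × W → β) (hφ : NonRepColoring (lexProd G H) φ)
    (hcol : (Finset.univ.image φ).card < thueNumber G * Fintype.card W)
    (g : V) (hg : ∃ h h' : W, h ≠ h' ∧ φ (g, h) = φ (g, h'))
    (g' : V) (hadj : G.Adj g g') :
    Function.Injective (fun h : W => φ (g', h)) :=
  neighbour_layer_rainbow_general G H φ hφ g hg g' hadj
end
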